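/- arXiv:1107.5896 — 4 statements merged into one kernel-verified Lean document; each statement's English description precedes it below -/
import Mathlib

section
/- The set of infinite binary sequences with infinitely many occurrences of 1 is Π⁰₂-complete: for every finite alphabet Y and every G_δ set E ⊆ Y^ω there is a continuous function f : Y^ω → {0,1}^ω with E = f⁻¹(ℛ), where ℛ = {σ | σ has infinitely many 1's}. -/
open Set

namespace Stmt3Aux

variable {Y : Type} [Fintype Y] [Nonempty Y] [TopologicalSpace Y] [DiscreteTopology Y]

/-- Cylinder set determined by a finite word. -/
def cyl (s : Σ n : ℕ, Fin n → Y) : Set (ℕ → Y) := {x | ∀ i : Fin s.1, x i = s.2 i}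

lemma isClopen_cyl (s : Σ n : ℕ, Fin n → Y) : IsClopen (cyl (Y := Y) s) := by
  have h : cyl (Y := Y) s = ⋂ i : Fin s.1, (fun x : ℕ → Y => x i) ⁻¹' {s.2 i} := by
    ext x; simp [cyl]
  rw [h]
  exact isClopen_iInter_of_finite fun i =>
    (isClopen_discrete {s.2 i}).preimage (continuous_apply _)

lemma mem_cyl_subset {W : Set (ℕ → Y)} (hW : IsOpen W) {x : ℕ → Y} (hx : x ∈ W) :
    ∃ s : Σ n : ℕ, Fin n → Y, x ∈ cyl s ∧ cyl s ⊆ W := by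
  rw [isOpen_pi_iff] at hW
  obtain ⟨I, u, hu, hsub⟩ := hW x hx
  classical
  refine ⟨⟨I.sup id + 1, fun i => x i⟩, fun i => rfl, ?_⟩
  intro y hy
  apply hsub
  intro a ha
  have haN : a < I.sup id + 1 := Nat.lt_succ_of_le (Finset.le_sup (f := id) ha)
  have : y a = x a := hy ⟨a, haN⟩
  rw [this]
  exact (hu a ha).2

end Stmt3Aux

open Stmt3Aux

/-- The set of infinite binary sequences with infinitely many occurrences of 1 is
`Π⁰₂`-complete: for every finite nonempty alphabet `Y` and every `G_δ` set `E ⊆ Y^ω`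
there is a continuous `f : Y^ω → {0,1}^ω` with `E = f⁻¹(ℛ)`. -/
theorem stmt_3 (Y : Type) [Fintype Y] [Nonempty Y] [TopologicalSpace Y] [DiscreteTopology Y]
    (E : Set (ℕ → Y)) (hE : IsGδ E) :
    ∃ f : (ℕ → Y) → (ℕ → Bool), Continuous f ∧
      E = f ⁻¹' {σ : ℕ → Bool | ∀ n : ℕ, ∃ m ≥ n, σ m = true} := by
  classical
  obtain ⟨T, hTopen, hTc, hTE⟩ := hE
  -- enumerate the open sets
  obtain ⟨U, hUopen, hUE⟩ :
      ∃ U : ℕ → Set (ℕ → Y), (∀ n, IsOpen (U n)) ∧ E = ⋂ n, U n := by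
    obtain ⟨g, hg⟩ := (hTc.insert univ).exists_eq_range (insert_nonempty _ _)
    refine ⟨g, fun n => ?_, ?_⟩
    · have : g n ∈ insert univ T := hg ▸ mem_range_self n
      rcases this with h | h
      · simp [h]
      · exact hTopen _ h
    · rw [hTE, ← sInter_range, ← hg, sInter_insert, univ_inter]
  -- decreasing open sets
  set V : ℕ → Set (ℕ → Y) := fun n => ⋂ i ∈ Iic n, U i with hVdef
  have hVopen : ∀ n, IsOpen (V n) := fun n =>
    (finite_Iic n).isOpen_biInter fun i _ => hUopen i
  have hVE : ∀ x, x ∈ E ↔ ∀ n, x ∈ V n := by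
    intro x
    rw [hUE]
    simp only [hVdef, mem_iInter, mem_Iic]
    exact ⟨fun h n i _ => h i, fun h i => h i i le_rfl⟩
  have hVanti : ∀ {a b : ℕ}, a ≤ b → V b ⊆ V a := by
    intro a b hab x hx
    simp only [hVdef, mem_iInter, mem_Iic] at hx ⊢
    exact fun i hi => hx i (hi.trans hab)
  -- enumerate cylinders
  obtain ⟨g, hg⟩ := exists_surjective_nat (Σ n : ℕ, Fin n → Y)
  set C : ℕ → ℕ → Set (ℕ → Y) := fun n k =>
    if cyl (g k) ⊆ V n then cyl (g k) else ∅ with hCdef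
  have hCclopen : ∀ n k, IsClopen (C n k) := by
    intro n k
    by_cases h : cyl (g k) ⊆ V n <;> simp [hCdef, h, isClopen_cyl, isClopen_empty]
  have hCsub : ∀ n k, C n k ⊆ V n := by
    intro n k
    by_cases h : cyl (g k) ⊆ V n <;> simp [hCdef, h]
  set New : ℕ → ℕ → Set (ℕ → Y) := fun n k =>
    C n k \ ⋃ j ∈ Finset.range k, C n j with hNewdef
  have hNewclopen : ∀ n k, IsClopen (New n k) :=
    fun n k => (hCclopen n k).diff (isClopen_biUnion_finset fun j _ => hCclopen n j)
  have hNewsub : ∀ n k, New n k ⊆ V n := fun n k => (diff_subset).trans (hCsub n k)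
  have hNewuniq : ∀ n k k' x, x ∈ New n k → x ∈ New n k' → k = k' := by
    intro n k k' x hk hk'
    by_contra hne
    rcases Nat.lt_or_ge k k' with h | h
    · exact hk'.2 (mem_biUnion (Finset.mem_range.mpr h) hk.1)
    · have h : k' < k := lt_of_le_of_ne h (Ne.symm hne)
      exact hk.2 (mem_biUnion (Finset.mem_range.mpr h) hk'.1)
  have hNewex : ∀ n x, x ∈ V n → ∃ k, x ∈ New n k := by
    intro n x hx
    obtain ⟨s, hxs, hs⟩ := mem_cyl_subset (hVopen n) hx
    obtain ⟨k0, hk0⟩ := hg s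
    have hP : ∃ k, x ∈ C n k := ⟨k0, by simp [hCdef, hk0, hs, hxs]⟩
    refine ⟨Nat.find hP, Nat.find_spec hP, ?_⟩
    intro hmem
    simp only [mem_iUnion, Finset.mem_range, exists_prop] at hmem
    obtain ⟨j, hj, hxj⟩ := hmem
    exact Nat.find_min hP hj hxj
  -- the function
  refine ⟨fun x m => (New (Nat.unpair m).1 (Nat.unpair m).2).boolIndicator x, ?_, ?_⟩
  · exact continuous_pi fun m =>
      (continuous_boolIndicator_iff_isClopen _).mpr (hNewclopen _ _)
  · ext x
    simp only [mem_preimage, mem_setOf_eq]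
    constructor
    · intro hx n
      obtain ⟨k, hk⟩ := hNewex n x ((hVE x).mp hx n)
      refine ⟨Nat.pair n k, Nat.left_le_pair n k, ?_⟩
      rw [Nat.unpair_pair]
      exact ((New n k).mem_iff_boolIndicator x).mp hk
    · intro h
      rw [hVE]
      intro n
      by_contra hxn
      set S : Set ℕ := {m | x ∈ New (Nat.unpair m).1 (Nat.unpair m).2} with hSdef
      have hmem : ∀ m ∈ S, (Nat.unpair m).1 < n := by
        intro m hm
        by_contra hge
        exact hxn (hVanti (le_of_not_gt hge) (hNewsub _ _ hm))
      have hinj : Set.InjOn (fun m => (Nat.unpair m).1) S := by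
        intro m hm m' hm' hmm
        have hmm' : (Nat.unpair m).1 = (Nat.unpair m').1 := hmm
        have h2 : (Nat.unpair m).2 = (Nat.unpair m').2 := by
          apply hNewuniq (Nat.unpair m).1 _ _ x hm
          rw [hmm']; exact hm'
        have : Nat.unpair m = Nat.unpair m' := Prod.ext hmm' h2
        have := congrArg (fun p : ℕ × ℕ => Nat.pair p.1 p.2) this
        simpa [Nat.pair_unpair] using this
      have hSfin : S.Finite := by
        apply Set.Finite.of_finite_image _ hinj
        exact (finite_Iio n).subset (by rintro _ ⟨m, hm, rfl⟩; exact hmem m hm)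
      obtain ⟨b, hb⟩ := hSfin.bddAbove
      obtain ⟨m, hmb, hmtrue⟩ := h (b + 1)
      have hmS : m ∈ S := ((New _ _).mem_iff_boolIndicator x).mpr hmtrue
      have := hb hmS
      omega
end

section
/- Every analytic subset of Cantor space is either countable or has cardinality 2^ℵ₀ (the perfect set property for analytic sets). -/
/-!
Write the analytic set as the range of a continuous map `f` from a Polish space `X`. If `f '' O`
is uncountable for an open `O ⊆ X`, two distinct condensation points of `f '' O` have disjoint
neighbourhoods, and the parts of `O` mapped into them contain small open balls whose images are
still uncountable. Iterating this splitting gives a Cantor scheme in `X` with vanishing diameters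
whose sibling pieces have disjoint images; the induced continuous map `g : (ℕ → Bool) → X`
then makes `f ∘ g` injective, so the range of `f` contains a copy of Cantor space.
-/

open Set Function Filter Topology Metric PiNat CantorScheme
open scoped ENNReal

section Condensation

variable {Y : Type*} [TopologicalSpace Y] [SecondCountableTopology Y]

theorem countable_setOf_mem_exists_mem_nhds_countable_inter (S : Set Y) :
    {y ∈ S | ∃ U ∈ 𝓝 y, (S ∩ U).Countable}.Countable := by
  obtain ⟨b, hbc, -, hb⟩ := TopologicalSpace.exists_countable_basis Y
  refine ((hbc.mono (sep_subset b fun U => (S ∩ U).Countable)).biUnion fun U hU => hU.2).mono ?_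
  rintro y ⟨hyS, U, hU, hSU⟩
  obtain ⟨V, hVb, hyV, hVU⟩ := hb.mem_nhds_iff.1 hU
  exact mem_biUnion ⟨hVb, hSU.mono (inter_subset_inter_right S hVU)⟩ ⟨hyS, hyV⟩

theorem exists_disjoint_isOpen_not_countable_inter [T2Space Y] {S : Set Y}
    (hS : ¬S.Countable) :
    ∃ U V, IsOpen U ∧ IsOpen V ∧ Disjoint U V ∧
      ¬(S ∩ U).Countable ∧ ¬(S ∩ V).Countable := by
  set K := S \ {y ∈ S | ∃ U ∈ 𝓝 y, (S ∩ U).Countable}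
  have hK : ¬K.Countable := fun hK =>
    hS ((hK.union (countable_setOf_mem_exists_mem_nhds_countable_inter S)).mono
      (subset_sdiff_union _ _))
  have hcond : ∀ y ∈ K, ∀ U, IsOpen U → y ∈ U → ¬(S ∩ U).Countable :=
    fun y hy U hU hyU hSU => hy.2 ⟨hy.1, U, hU.mem_nhds hyU, hSU⟩
  obtain ⟨y₀, hy₀, y₁, hy₁, hne⟩ := not_subsingleton_iff.1 fun h => hK h.countable
  obtain ⟨U, V, hU, hV, hyU, hyV, hUV⟩ := t2_separation hne
  exact ⟨U, V, hU, hV, hUV, hcond y₀ hy₀ U hU hyU, hcond y₁ hy₁ V hV hyV⟩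

end Condensation

section Scheme

variable {X Y : Type*}

theorem exists_isOpen_closure_subset_ediam_le_not_countable_image [PseudoEMetricSpace X]
    [SecondCountableTopology X] (f : X → Y) {O : Set X} (hO : IsOpen O)
    (h : ¬(f '' O).Countable) {ε : ℝ≥0∞} (hε : 0 < ε) :
    ∃ U, IsOpen U ∧ closure U ⊆ O ∧ ediam U ≤ ε ∧ ¬(f '' U).Countable := by
  set I := {p : X × ℝ≥0∞ | 2 * p.2 ≤ ε ∧ closedEBall p.1 p.2 ⊆ O ∧ 0 < p.2}
  have hcover : ⋃ p ∈ I, eball p.1 p.2 = O := by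
    refine Subset.antisymm (iUnion₂_subset fun p hp => eball_subset_closedEBall.trans hp.2.1)
      fun x hx => ?_
    obtain ⟨r, hr, hrO⟩ := nhds_basis_closedEBall.mem_iff.1 (hO.mem_nhds hx)
    have hr' : 0 < min r (ε / 2) := lt_min hr (ENNReal.half_pos hε.ne')
    refine mem_biUnion (x := (x, min r (ε / 2))) ⟨?_, ?_, hr'⟩ (mem_eball_self hr')
    · exact le_trans (by gcongr; exact min_le_right _ _) ENNReal.mul_div_le
    · exact (closedEBall_subset_closedEBall (min_le_left _ _)).trans hrO
  obtain ⟨T, hTI, hTc, hTU⟩ :=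
    TopologicalSpace.isOpen_biUnion_countable I (fun p => eball p.1 p.2) fun _ _ => isOpen_eball
  rw [← hcover, ← hTU, image_iUnion₂] at h
  obtain ⟨p, hpT, hp⟩ : ∃ p ∈ T, ¬(f '' eball p.1 p.2).Countable := by
    by_contra! hall
    exact h (hTc.biUnion hall)
  obtain ⟨hpε, hpO, -⟩ := hTI hpT
  exact ⟨eball p.1 p.2, isOpen_eball,
    (closure_minimal eball_subset_closedEBall isClosed_closedEBall).trans hpO,
    ediam_eball_le.trans hpε, hp⟩

theorem exists_split_of_not_countable_image [PseudoEMetricSpace X] [SecondCountableTopology X]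
    [TopologicalSpace Y] [T2Space Y] [SecondCountableTopology Y] {f : X → Y} (hf : Continuous f)
    {O : Set X} (hO : IsOpen O) (h : ¬(f '' O).Countable) {ε : ℝ≥0∞} (hε : 0 < ε) :
    ∃ U : Bool → Set X, (∀ b, IsOpen (U b) ∧ closure (U b) ⊆ O ∧ ediam (U b) ≤ ε ∧
      ¬(f '' U b).Countable) ∧ Pairwise (Disjoint on fun b => f '' U b) := by
  have refine_into : ∀ W, IsOpen W → ¬(f '' O ∩ W).Countable → ∃ U, (IsOpen U ∧
      closure U ⊆ O ∧ ediam U ≤ ε ∧ ¬(f '' U).Countable) ∧ f '' U ⊆ W := by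
    intro W hW hOW
    rw [← image_inter_preimage] at hOW
    obtain ⟨U, hU, hUO, hUε, hUc⟩ :=
      exists_isOpen_closure_subset_ediam_le_not_countable_image f (hO.inter (hW.preimage hf))
        hOW hε
    exact ⟨U, ⟨hU, hUO.trans inter_subset_left, hUε, hUc⟩,
      image_subset_iff.2 ((subset_closure.trans hUO).trans inter_subset_right)⟩
  obtain ⟨W₀, W₁, hW₀, hW₁, hW, h₀, h₁⟩ :=
    exists_disjoint_isOpen_not_countable_inter h
  obtain ⟨U₀, hU₀, hU₀W⟩ := refine_into W₀ hW₀ h₀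
  obtain ⟨U₁, hU₁, hU₁W⟩ := refine_into W₁ hW₁ h₁
  refine ⟨fun b => cond b U₁ U₀, Bool.forall_bool.2 ⟨hU₀, hU₁⟩, ?_⟩
  simp only [Bool.apply_cond (image f)]
  exact pairwise_disjoint_on_bool.2 (hW.mono hU₀W hU₁W).symm

theorem CantorScheme.Disjoint.injective_of_forall_mem {β α : Type*} {A : List β → Set α}
    (hA : CantorScheme.Disjoint A) {g : (ℕ → β) → α} (hg : ∀ x n, g x ∈ A (res x n)) :
    Injective g := by
  intro x y hxy
  by_contra hne
  have hres : res x (firstDiff x y) = res y (firstDiff x y) :=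
    res_eq_res.2 fun _ hm => apply_eq_of_lt_firstDiff hm
  refine disjoint_left.1 (hA _ (apply_firstDiff_ne hne)) (hg x (firstDiff x y + 1)) ?_
  rw [hxy, hres, ← res_succ]
  exact hg y _

theorem Continuous.exists_nat_bool_injective_comp [PseudoMetricSpace X] [CompleteSpace X]
    [SecondCountableTopology X] [TopologicalSpace Y] [T2Space Y] [SecondCountableTopology Y]
    {f : X → Y} (hf : Continuous f) (h : ¬(range f).Countable) :
    ∃ g : (ℕ → Bool) → X, Continuous g ∧ Injective (f ∘ g) := by
  let P := {O : Set X // IsOpen O ∧ ¬(f '' O).Countable}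
  choose U hU hdisj using fun (O : P) (n : ℕ) =>
    exists_split_of_not_countable_image hf O.2.1 O.2.2
      (ENNReal.inv_pos.2 (ENNReal.natCast_ne_top n))
  let D : List Bool → P := fun l => l.rec ⟨univ, isOpen_univ, by rwa [image_univ]⟩
    fun b l O => ⟨U O (l.length + 1) b, (hU O _ b).1, (hU O _ b).2.2.2⟩
  let A : List Bool → Set X := fun l => (D l).1
  have hanti : ClosureAntitone A := fun l b => (hU (D l) _ b).2.1
  have hA : ∀ l, ediam (A l) ≤ (l.length : ℝ≥0∞)⁻¹
    | [] => by simp -- `0⁻¹ = ⊤` in `ℝ≥0∞`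
    | b :: l => (hU (D l) _ b).2.2.1
  have hdiam : VanishingDiam A := fun x =>
    tendsto_of_tendsto_of_tendsto_of_le_of_le tendsto_const_nhds
      ENNReal.tendsto_inv_nat_nhds_zero (fun _ => zero_le) fun n => by
        simpa only [res_length] using hA (res x n)
  have hnonempty : ∀ l, (A l).Nonempty := fun l =>
    image_nonempty.1 (nonempty_iff_ne_empty.2 fun he => (D l).2.2 (he ▸ countable_empty))
  have hdom := hanti.map_of_vanishingDiam hdiam hnonempty
  let g : (ℕ → Bool) → X := fun x => (inducedMap A).2 ⟨x, hdom ▸ mem_univ x⟩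
  exact ⟨g, hdiam.map_continuous.comp (by fun_prop),
    CantorScheme.Disjoint.injective_of_forall_mem (A := fun l => f '' A l)
      (fun l => hdisj (D l) _) fun x n => mem_image_of_mem f (map_mem _ n)⟩

end Scheme

theorem MeasureTheory.AnalyticSet.exists_nat_bool_injection_of_not_countable {Y : Type*}
    [TopologicalSpace Y] [T2Space Y] [SecondCountableTopology Y] {A : Set Y}
    (hA : AnalyticSet A) (hunc : ¬A.Countable) :
    ∃ g : (ℕ → Bool) → Y, range g ⊆ A ∧ Continuous g ∧ Injective g := by
  obtain ⟨β, _, _, f, hf, rfl⟩ := analyticSet_iff_exists_polishSpace_range.1 hA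
  let := TopologicalSpace.upgradeIsCompletelyMetrizable β
  obtain ⟨g, hg, hinj⟩ := hf.exists_nat_bool_injective_comp hunc
  exact ⟨f ∘ g, range_comp_subset_range g f, hf.comp hg, hinj⟩

/-- Perfect set property for analytic sets: every analytic subset of Cantor space
is either countable or has cardinality `2^ℵ₀`. -/
theorem stmt_6 (A : Set (ℕ → Bool)) (hA : MeasureTheory.AnalyticSet A) :
    A.Countable ∨ Cardinal.mk A = 2 ^ Cardinal.aleph0 := by
  refine or_iff_not_imp_left.2 fun hunc => ?_
  obtain ⟨g, hgA, -, hg⟩ := hA.exists_nat_bool_injection_of_not_countable hunc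
  have hcard : Cardinal.mk (ℕ → Bool) = 2 ^ Cardinal.aleph0 := by simp
  refine le_antisymm (hcard ▸ Cardinal.mk_set_le A) ?_
  rw [← hcard, ← Cardinal.mk_range_eq g hg]
  exact Cardinal.mk_le_mk_of_subset hgA
end

section
/- The collection of Borel subsets of Σ^ω is strictly contained in the collection of analytic subsets of Σ^ω, when Σ has at least two letters: there exists an analytic set that is not Borel. -/
/-!
Diagonalisation against a universal analytic set. A point `c` of Baire space codes a tree on
`ℕ × ℕ`, hence a closed set `[T_c] ⊆ ℕ → ℕ × ℕ`, and the projections `{x | ∃ z, (x, z) ∈ [T_c]}`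
run through all analytic subsets of Baire space; the set `U` of pairs `(c, x)` with `x` in the set
coded by `c` is itself analytic. So the diagonal `A = {x | (x, x) ∈ U}` is analytic while `Aᶜ`
is not. Finally, Baire space embeds continuously and injectively into `Σ^ω`, by
`y ↦ b a^(y 0) b a^(y 1) …`, and the image of `A` cannot be Borel: its complement would be
analytic, and so would be `Aᶜ`, its preimage.
-/

open Set Filter Topology MeasureTheory PiNat Encodable Function

namespace UniversalAnalytic

section Branches

variable {α : Type*} [TopologicalSpace α] [DiscreteTopology α]

lemma eventually_res_eq (w : ℕ → α) (n : ℕ) : ∀ᶠ v in 𝓝 w, res v n = res w n := by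
  filter_upwards [(isOpen_cylinder _ w n).mem_nhds (self_mem_cylinder w n)] with v hv
  rwa [cylinder_eq_res] at hv

lemma mem_closure_iff_forall_res {F : Set (ℕ → α)} {w : ℕ → α} :
    w ∈ closure F ↔ ∀ n, ∃ v ∈ F, res v n = res w n := by
  refine ⟨fun hw n => ?_, fun h => (isTopologicalBasis_cylinders _).mem_closure_iff.2 ?_⟩
  · obtain ⟨v, hv, hvF⟩ := mem_closure_iff_nhds.1 hw _ (eventually_res_eq w n)
    exact ⟨v, hvF, hv⟩
  · rintro _ ⟨x, n, rfl⟩ hw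
    obtain ⟨v, hvF, hv⟩ := h n
    rw [← mem_cylinder_iff_eq.1 hw, cylinder_eq_res]
    exact ⟨v, hv, hvF⟩

lemma continuous_pi_of_res_eq {β : Type*} [TopologicalSpace β] {f : (ℕ → α) → ℕ → β}
    (m : ℕ → ℕ) (hf : ∀ k x y, res x (m k) = res y (m k) → f x k = f y k) : Continuous f :=
  continuous_pi fun k => continuous_iff_continuousAt.2 fun x =>
    continuousAt_const.congr <| (eventually_res_eq x (m k)).mono fun y hy => hf k x y hy.symm

variable [Encodable α]

/-- A code `c : ℕ → ℕ` stands for the tree of finite sequences `s` with `c (encode s) = 1`. -/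
def branches (c : ℕ → ℕ) : Set (ℕ → α) := {w | ∀ n, c (encode (res w n)) = 1}

lemma isClosed_setOf_mem_branches :
    IsClosed {p : (ℕ → ℕ) × (ℕ → α) | p.2 ∈ branches p.1} := by
  have hcont (n : ℕ) : Continuous fun p : (ℕ → ℕ) × (ℕ → α) => p.1 (encode (res p.2 n)) := by
    refine continuous_iff_continuousAt.2 fun p => ?_
    have hp : Continuous fun q : (ℕ → ℕ) × (ℕ → α) => q.1 (encode (res p.2 n)) := by fun_prop
    refine hp.continuousAt.congr ?_
    filter_upwards [continuous_snd.continuousAt.eventually (eventually_res_eq p.2 n)] with q hq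
    simp [hq]
  change IsClosed {p : (ℕ → ℕ) × (ℕ → α) | ∀ n, p.1 (encode (res p.2 n)) = 1}
  rw [ofPred_forall]
  exact isClosed_iInter fun n => isClosed_eq (hcont n) continuous_const

lemma exists_branches_eq {F : Set (ℕ → α)} (hF : IsClosed F) : ∃ c, branches c = F := by
  classical
  refine ⟨fun m => if ∃ v ∈ F, ∃ n, encode (res v n) = m then 1 else 0, Set.ext fun w => ?_⟩
  have res_eq_iff (v : ℕ → α) (n : ℕ) : (∃ k, res v k = res w n) ↔ res v n = res w n := by
    refine ⟨fun ⟨k, hk⟩ => ?_, fun h => ⟨n, h⟩⟩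
    obtain rfl : k = n := by simpa using congrArg List.length hk
    exact hk
  simp only [branches, mem_ofPred_eq, ite_eq_left_iff, zero_ne_one, imp_false, not_not,
    encode_inj, res_eq_iff]
  rw [← mem_closure_iff_forall_res, hF.closure_eq]

end Branches

/-- `c` codes the projection to the first factor of the closed set `branches c ⊆ ℕ → ℕ × ℕ`. -/
def universalAnalytic : Set ((ℕ → ℕ) × (ℕ → ℕ)) :=
  {p | ∃ z : ℕ → ℕ, (fun i => (p.2 i, z i)) ∈ branches (α := ℕ × ℕ) p.1}

lemma analyticSet_universalAnalytic : AnalyticSet universalAnalytic := by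
  have hU : universalAnalytic = (fun q : (ℕ → ℕ) × (ℕ → ℕ × ℕ) => (q.1, fun i => (q.2 i).1)) ''
      {q | q.2 ∈ branches q.1} := by
    ext ⟨c, x⟩
    constructor
    · rintro ⟨z, hz⟩
      exact ⟨(c, fun i => (x i, z i)), hz, rfl⟩
    · rintro ⟨⟨c, w⟩, hw, h⟩
      cases h
      exact ⟨fun i => (w i).2, hw⟩
  rw [hU]
  exact isClosed_setOf_mem_branches.analyticSet.image_of_continuous (by fun_prop)

lemma exists_isClosed_of_analyticSet {B : Set (ℕ → ℕ)} (hB : AnalyticSet B) :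
    ∃ F : Set (ℕ → ℕ × ℕ), IsClosed F ∧ B = {x | ∃ z : ℕ → ℕ, (fun i => (x i, z i)) ∈ F} := by
  rw [AnalyticSet] at hB
  rcases hB with rfl | ⟨f, hf, rfl⟩
  · exact ⟨∅, isClosed_empty, by simp⟩
  · refine ⟨{w | f (fun i => (w i).2) = fun i => (w i).1},
      isClosed_eq (by fun_prop) (by fun_prop), ?_⟩
    ext x
    simp

lemma exists_prodMk_preimage_universalAnalytic {B : Set (ℕ → ℕ)} (hB : AnalyticSet B) :
    ∃ c, Prod.mk c ⁻¹' universalAnalytic = B := by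
  obtain ⟨F, hF, rfl⟩ := exists_isClosed_of_analyticSet hB
  obtain ⟨c, rfl⟩ := exists_branches_eq hF
  exact ⟨c, rfl⟩

def diagonalAnalytic : Set (ℕ → ℕ) := (fun x => (x, x)) ⁻¹' universalAnalytic

lemma analyticSet_diagonalAnalytic : AnalyticSet diagonalAnalytic :=
  analyticSet_universalAnalytic.preimage (by fun_prop)

lemma not_analyticSet_compl_diagonalAnalytic : ¬ AnalyticSet diagonalAnalyticᶜ := by
  intro h
  obtain ⟨c, hc⟩ := exists_prodMk_preimage_universalAnalytic h
  have hcc : (c, c) ∈ universalAnalytic ↔ (c, c) ∉ universalAnalytic := Set.ext_iff.1 hc c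
  exact (iff_not_self hcc).elim

def truePos (y : ℕ → ℕ) (n : ℕ) : ℕ := n + ∑ i ∈ Finset.range n, y i

lemma strictMono_truePos (y : ℕ → ℕ) : StrictMono (truePos y) :=
  strictMono_nat_of_lt_succ fun n => by simp only [truePos, Finset.sum_range_succ]; omega

lemma injective_truePos : Injective truePos := by
  intro y y' h
  funext n
  have h1 := congrFun h n
  have h2 := congrFun h (n + 1)
  simp only [truePos, Finset.sum_range_succ] at h1 h2
  omega

lemma truePos_eq_of_res_eq {y y' : ℕ → ℕ} {k n : ℕ} (h : res y k = res y' k) (hn : n ≤ k) :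
    truePos y n = truePos y' n := by
  simp only [truePos]
  congr 1
  exact Finset.sum_congr rfl fun i hi => res_eq_res.1 h (by grind)

open Classical in
/-- `baireToCantor y` reads `1 0^(y 0) 1 0^(y 1) 1 …`; its `n`-th `1` sits at `truePos y n`. -/
noncomputable def baireToCantor (y : ℕ → ℕ) (k : ℕ) : Bool := decide (k ∈ range (truePos y))

lemma injective_baireToCantor : Injective baireToCantor := by
  intro y y' h
  have hrange : range (truePos y) = range (truePos y') := by
    ext k
    simpa [baireToCantor] using congrFun h k
  exact injective_truePos ((strictMono_truePos y).range_inj (strictMono_truePos y') |>.1 hrange)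

lemma continuous_baireToCantor : Continuous baireToCantor := by
  refine continuous_pi_of_res_eq id fun k y y' h => ?_
  have hpos (n : ℕ) (hn : n ≤ k) := truePos_eq_of_res_eq h hn
  have hle (y : ℕ → ℕ) (n : ℕ) : n ≤ truePos y n := Nat.le_add_right _ _
  simp only [baireToCantor, decide_eq_decide, mem_range]
  constructor
  · rintro ⟨n, rfl⟩
    exact ⟨n, (hpos n (hle y n)).symm⟩
  · rintro ⟨n, rfl⟩
    exact ⟨n, hpos n (hle y' n)⟩

lemma exists_continuous_injective_baire {Γ : Type*} [TopologicalSpace Γ] [DiscreteTopology Γ]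
    {a b : Γ} (hab : a ≠ b) : ∃ ι : (ℕ → ℕ) → ℕ → Γ, Continuous ι ∧ Injective ι := by
  have hcond : Injective fun t : Bool => bif t then b else a := by
    intro s t; cases s <;> cases t <;> simp [hab, hab.symm]
  refine ⟨fun y k => bif baireToCantor y k then b else a,
    continuous_pi fun k =>
      (continuous_of_discreteTopology (f := fun t : Bool => bif t then b else a)).comp
      ((continuous_apply k).comp continuous_baireToCantor),
    (hcond.comp_left).comp injective_baireToCantor⟩

lemma not_measurableSet_image_of_not_analyticSet_compl {X Y : Type*} [TopologicalSpace X]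
    [PolishSpace X] [TopologicalSpace Y] [PolishSpace Y] [MeasurableSpace Y] [BorelSpace Y]
    {f : X → Y} (hf : Continuous f) (hinj : Injective f) {s : Set X}
    (hs : ¬ AnalyticSet sᶜ) : ¬ MeasurableSet (f '' s) := fun hmeas => by
  have := hmeas.compl.analyticSet.preimage hf
  rw [preimage_compl, hinj.preimage_image] at this
  exact hs this

end UniversalAnalytic

/-- When `Γ` has at least two letters, the Borel subsets of `Γ^ω` are strictly
contained in the analytic subsets: there is an analytic set that is not Borel. -/
theorem stmt_9 (Γ : Type) [Fintype Γ] [TopologicalSpace Γ] [DiscreteTopology Γ]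
    (hcard : 2 ≤ Fintype.card Γ)
    [MeasurableSpace (ℕ → Γ)] [BorelSpace (ℕ → Γ)] :
    ∃ A : Set (ℕ → Γ), MeasureTheory.AnalyticSet A ∧ ¬ MeasurableSet A := by
  obtain ⟨a, b, hab⟩ := Fintype.one_lt_card_iff.1 hcard
  obtain ⟨ι, hι, hinj⟩ := UniversalAnalytic.exists_continuous_injective_baire hab
  have : PolishSpace Γ := inferInstance
  exact ⟨ι '' UniversalAnalytic.diagonalAnalytic,
    UniversalAnalytic.analyticSet_diagonalAnalytic.image_of_continuous hι,
    UniversalAnalytic.not_measurableSet_image_of_not_analyticSet_compl hι hinj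
      UniversalAnalytic.not_analyticSet_compl_diagonalAnalytic⟩
end

section
/- In a Polish space, a closed set P is perfect (nonempty with no isolated points) if and only if P is nonempty and every point of P is the limit of a sequence of points of P distinct from it; and any nonempty closed set without isolated points in Cantor space contains a homeomorphic copy of Cantor space. -/
open Filter Set Topology

section IsolatedPoints

variable {X : Type*} [TopologicalSpace X] {P : Set X} {x : X}

theorem accPt_principal_iff_not_exists_isOpen_inter_eq_singleton (hx : x ∈ P) :
    AccPt x (𝓟 P) ↔ ¬∃ U : Set X, IsOpen U ∧ U ∩ P = {x} := by
  rw [accPt_iff_nhds, ← not_iff_not, not_not]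
  push Not
  constructor
  · rintro ⟨V, hV, hVP⟩
    obtain ⟨U, hUV, hU, hxU⟩ := mem_nhds_iff.1 hV
    refine ⟨U, hU, Subset.antisymm (fun y hy => hVP y ⟨hUV hy.1, hy.2⟩) ?_⟩
    simpa using ⟨hxU, hx⟩
  · rintro ⟨U, hU, hUP⟩
    have hxU : x ∈ U := (hUP.symm ▸ mem_singleton x : x ∈ U ∩ P).1
    exact ⟨U, hU.mem_nhds hxU, fun y hy => (hUP ▸ hy : y ∈ ({x} : Set X))⟩

theorem perfect_iff_isClosed_and_forall_not_isolated :
    Perfect P ↔ IsClosed P ∧ ∀ x ∈ P, ¬∃ U : Set X, IsOpen U ∧ U ∩ P = {x} := by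
  simp only [perfect_def, Preperfect]
  exact and_congr_right fun _ =>
    forall₂_congr fun _ hx => accPt_principal_iff_not_exists_isOpen_inter_eq_singleton hx

theorem accPt_principal_iff_exists_seq_tendsto [FrechetUrysohnSpace X] :
    AccPt x (𝓟 P) ↔
      ∃ u : ℕ → X, (∀ n, u n ∈ P ∧ u n ≠ x) ∧ Tendsto u atTop (𝓝 x) := by
  rw [accPt_principal_iff_clusterPt, ← mem_closure_iff_clusterPt, mem_closure_iff_seq_limit]
  rfl

end IsolatedPoints

theorem Perfect.exists_isEmbedding_nat_bool {X : Type*} [TopologicalSpace X]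
    [TopologicalSpace.IsCompletelyMetrizableSpace X] {P : Set X} (hP : Perfect P)
    (hne : P.Nonempty) :
    ∃ f : (ℕ → Bool) → X, IsEmbedding f ∧ range f ⊆ P := by
  let := TopologicalSpace.upgradeIsCompletelyMetrizable X
  obtain ⟨f, hrange, hcont, hinj⟩ := hP.exists_nat_bool_injection hne
  -- a continuous injection from a compact space into a Hausdorff space is an embedding
  exact ⟨f, (hcont.isClosedEmbedding hinj).isEmbedding, hrange⟩

/-- In a Polish space, a closed set `P` is perfect (nonempty with no isolated points)
iff `P` is nonempty and every point of `P` is the limit of a sequence of points of `P`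
distinct from it; and any nonempty closed subset of Cantor space without isolated
points contains a homeomorphic copy of Cantor space. -/
theorem stmt_19 :
    (∀ (X : Type) [TopologicalSpace X] [PolishSpace X] (P : Set X), IsClosed P →
      ((P.Nonempty ∧ ∀ x ∈ P, ¬∃ U : Set X, IsOpen U ∧ U ∩ P = {x}) ↔
        (P.Nonempty ∧ ∀ x ∈ P, ∃ u : ℕ → X, (∀ n, u n ∈ P ∧ u n ≠ x) ∧
          Filter.Tendsto u Filter.atTop (nhds x)))) ∧
    (∀ P : Set (ℕ → Bool), IsClosed P → P.Nonempty →
      (∀ x ∈ P, ¬∃ U : Set (ℕ → Bool), IsOpen U ∧ U ∩ P = {x}) →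
      ∃ f : (ℕ → Bool) → (ℕ → Bool), Topology.IsEmbedding f ∧ Set.range f ⊆ P) := by
  refine ⟨fun X _ _ P _ => ?_, fun P hP hne hiso => ?_⟩
  · refine and_congr_right fun _ => forall₂_congr fun x hx => ?_
    rw [← accPt_principal_iff_not_exists_isOpen_inter_eq_singleton hx,
      accPt_principal_iff_exists_seq_tendsto]
  · have hperf : Perfect P := perfect_iff_isClosed_and_forall_not_isolated.2 ⟨hP, hiso⟩
    exact hperf.exists_isEmbedding_nat_bool hne
end
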